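/- arXiv:1302.1986 — 3 statements merged into one kernel-verified Lean document; each statement's English description precedes it below -/
import Mathlib

section
/- Let F(x) = Σ_{n≥1} f(n)x^n be a formal power series over ℚ with integer coefficients and f(1) = 1, and let A(x) be the unique formal power series over ℚ with zero constant term and linear coefficient 1 satisfying A(A(x)) = F(x). Then for all 1 ≤ k ≤ n, the rational number 4^{n−k} · A^Δ(n,k) is an integer, where A^Δ(n,k) = [x^n]A(x)^k. -/
/-! Write `a(n, k) = [xⁿ]Aᵏ`. Since `F(x)ᵏ = Aᵏ(A(x))`, we get `[xⁿ]Fᵏ = ∑ⱼ a(j, k) a(n, j)`, and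
the two extreme terms `j = k` and `j = n` both equal `a(n, k)` because `a(j, j) = 1`. Hence
`2 a(n, k) = [xⁿ]Fᵏ - ∑_{k<j<n} a(j, k) a(n, j)`, and induction on `n - k` shows that
`2^(2(n-k)-1) a(n, k)` is an integer for `k < n`: the exponents attached to the two factors of each
product add up to `2(n-k) - 2`, which leaves exactly the factor `2` needed to cancel the one on the
left. -/

open PowerSeries Finset

/-- Composition `G(A(x))` of formal power series, valid when `A` has zero
constant term. -/
noncomputable def PSComp (G A : PowerSeries ℚ) : PowerSeries ℚ :=
  PowerSeries.mk fun n => ∑ m ∈ range (n + 1), coeff m G * coeff n (A ^ m)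

namespace PowerSeries

variable {R : Type*} [CommRing R] {A : R⟦X⟧}

theorem coeff_pow_of_lt (hA0 : constantCoeff A = 0) {j k : ℕ} (h : j < k) :
    coeff j (A ^ k) = 0 := by
  obtain ⟨B, rfl⟩ := X_dvd_iff.2 hA0
  rw [mul_pow, coeff_X_pow_mul', if_neg (not_le.2 h)]

theorem coeff_pow_self (hA0 : constantCoeff A = 0) (hA1 : coeff 1 A = 1) (k : ℕ) :
    coeff k (A ^ k) = 1 := by
  obtain ⟨B, rfl⟩ := X_dvd_iff.2 hA0
  have hB : constantCoeff B = 1 := by simpa using hA1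
  rw [mul_pow, coeff_X_pow_mul', if_pos le_rfl, Nat.sub_self, coeff_zero_eq_constantCoeff,
    map_pow, hB, one_pow]

theorem coeff_subst_eq_sum (hA0 : constantCoeff A = 0) (G : R⟦X⟧) (n : ℕ) :
    coeff n (G.subst A) = ∑ d ∈ range (n + 1), coeff d G * coeff n (A ^ d) := by
  rw [coeff_subst' (HasSubst.of_constantCoeff_zero' hA0)]
  apply finsum_eq_sum_of_support_subset
  intro d hd
  by_contra h
  simp only [coe_range, Set.mem_Iio, not_lt] at h
  exact hd (by dsimp only; rw [coeff_pow_of_lt hA0 (by omega), smul_zero])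

theorem coeff_pow_mem {S : Subring R} {F : R⟦X⟧} (hF : ∀ n, coeff n F ∈ S) (k n : ℕ) :
    coeff n (F ^ k) ∈ S := by
  have hG : map S.subtype (mk fun n ↦ ⟨coeff n F, hF n⟩) = F := by ext; simp
  rw [← hG, ← map_pow, coeff_map]
  exact SetLike.coe_mem _

theorem two_mul_coeff_pow_eq (hA0 : constantCoeff A = 0) (hA1 : coeff 1 A = 1) {k n : ℕ}
    (hkn : k < n) :
    2 * coeff n (A ^ k) = coeff n (A.subst A ^ k) -
      ∑ j ∈ Ioo k n, coeff j (A ^ k) * coeff n (A ^ j) := by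
  have hsum : ∑ j ∈ range k, coeff j (A ^ k) * coeff n (A ^ j) = 0 :=
    sum_eq_zero fun j hj ↦ by rw [coeff_pow_of_lt hA0 (mem_range.1 hj), zero_mul]
  rw [← subst_pow (HasSubst.of_constantCoeff_zero' hA0), coeff_subst_eq_sum hA0,
    sum_range_succ, ← sum_range_add_sum_Ico _ hkn.le, hsum, sum_eq_sum_Ico_succ_bot hkn,
    Ico_add_one_left_eq_Ioo, coeff_pow_self hA0 hA1, coeff_pow_self hA0 hA1]
  ring

theorem two_pow_mul_coeff_pow_mem (hA0 : constantCoeff A = 0) (hA1 : coeff 1 A = 1)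
    {S : Subring R} (hS : ∀ n, coeff n (A.subst A) ∈ S) (d k : ℕ) :
    2 ^ (2 * d + 1) * coeff (k + d + 1) (A ^ k) ∈ S := by
  induction d using Nat.strong_induction_on generalizing k with
  | _ d ih =>
  set n := k + d + 1
  have hterm : ∀ j ∈ Ioo k n,
      2 ^ (2 * d) * (coeff j (A ^ k) * coeff n (A ^ j)) ∈ S := by
    intro j hj
    obtain ⟨hkj, hjn⟩ := mem_Ioo.1 hj
    obtain ⟨d₁, rfl⟩ := Nat.exists_eq_add_of_lt hkj
    obtain ⟨d₂, hn⟩ := Nat.exists_eq_add_of_lt hjn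
    have hd : d = d₁ + d₂ + 1 := by omega
    have h₁ := ih d₁ (by omega) k
    have h₂ := ih d₂ (by omega) (k + d₁ + 1)
    rw [← hn] at h₂
    convert S.mul_mem h₁ h₂ using 1
    rw [hd]
    ring
  have key : 2 ^ (2 * d + 1) * coeff n (A ^ k) =
      2 ^ (2 * d) * coeff n (A.subst A ^ k) -
        ∑ j ∈ Ioo k n, 2 ^ (2 * d) * (coeff j (A ^ k) * coeff n (A ^ j)) := by
    rw [← mul_sum, ← mul_sub, ← two_mul_coeff_pow_eq hA0 hA1 (by omega)]
    ring
  rw [key]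
  exact S.sub_mem (S.mul_mem (S.pow_mem (ofNat_mem S 2) _) (coeff_pow_mem hS k n))
    (S.sum_mem hterm)

end PowerSeries

theorem PSComp_eq_subst {A : ℚ⟦X⟧} (hA0 : constantCoeff A = 0) (G : ℚ⟦X⟧) :
    PSComp G A = G.subst A := by
  ext n
  rw [PSComp, coeff_mk, coeff_subst_eq_sum hA0]

theorem stmt_11_general (F : PowerSeries ℚ)
    (hFint : ∀ n, ∃ m : ℤ, coeff n F = m)
    (A : PowerSeries ℚ) (hA0 : constantCoeff A = 0) (hA1 : coeff 1 A = 1)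
    (hAF : PSComp A A = F) (n k : ℕ) :
    ∃ m : ℤ, (4 : ℚ) ^ (n - k) * coeff n (A ^ k) = m := by
  have hS : ∀ n, coeff n (A.subst A) ∈ (⊥ : Subring ℚ) := by
    rw [← PSComp_eq_subst hA0, hAF]
    intro n
    obtain ⟨m, hm⟩ := hFint n
    exact Subring.mem_bot.2 ⟨m, hm.symm⟩
  rcases lt_trichotomy n k with hnk | rfl | hkn
  · exact ⟨0, by simp [coeff_pow_of_lt hA0 hnk]⟩
  · exact ⟨1, by simp [coeff_pow_self hA0 hA1]⟩
  · obtain ⟨d, rfl⟩ := Nat.exists_eq_add_of_lt hkn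
    obtain ⟨m, hm⟩ := Subring.mem_bot.1 (two_pow_mul_coeff_pow_mem hA0 hA1 hS d k)
    refine ⟨2 * m, ?_⟩
    rw [Int.cast_mul, hm, show k + d + 1 - k = d + 1 by omega, show (4 : ℚ) = 2 ^ 2 by norm_num,
      ← pow_mul]
    ring

theorem stmt_11 (F : PowerSeries ℚ) (hF0 : constantCoeff F = 0)
    (hFint : ∀ n, ∃ m : ℤ, coeff n F = m) (hF1 : coeff 1 F = 1)
    (A : PowerSeries ℚ) (hA0 : constantCoeff A = 0) (hA1 : coeff 1 A = 1)
    (hAF : PSComp A A = F) (n k : ℕ) (hk : 1 ≤ k) (hkn : k ≤ n) :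
    ∃ m : ℤ, (4 : ℚ) ^ (n - k) * coeff n (A ^ k) = m :=
  stmt_11_general F hFint A hA0 hA1 hAF n k
end

section
/- Let F(x) = Σ_{n≥1} f(n)x^n be a formal power series over ℚ with integer coefficients and f(1) = 1. Then the unique formal power series A(x) over ℚ with zero constant term and linear coefficient 1 satisfying A(A(x)) = F(4x)/4 has integer coefficients. -/
open PowerSeries Finset

/-!
Write `A = X * U` with `U(0) = 1`. The coefficient of `x^(k+2)` in `A(A(x))` is
`2 u_(k+1) + ∑_(i<k) u_(i+1) [x^(k-i)] U^(i+2)`. By strong induction, `U ≡ 1` coefficientwise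
modulo `2`: then `U^(i+2) ≡ 1` as well, so every term of the sum is a product of two even
integers, while the left-hand side `4^(k+1) f(k+2)` is divisible by `4`; hence `u_(k+1)` is even.
-/

open AddSubgroup

section

variable {R : Type*} [CommRing R]

theorem mul_mem_zmultiples_mul {a b x y : R} (hx : x ∈ zmultiples a) (hy : y ∈ zmultiples b) :
    x * y ∈ zmultiples (a * b) := by
  obtain ⟨k, rfl⟩ := mem_zmultiples_iff.mp hx
  obtain ⟨l, rfl⟩ := mem_zmultiples_iff.mp hy
  exact mem_zmultiples_iff.mpr ⟨k * l, (smul_mul_smul_comm k a l b).symm⟩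

theorem mem_zmultiples_one_of_sub_mem {d : ℤ} {c y : R} (hcy : c - y ∈ zmultiples (d : R))
    (hy : y ∈ zmultiples 1) : c ∈ zmultiples (1 : R) := by
  rw [← sub_add_cancel c y]
  exact add_mem (zmultiples_le_of_mem (intCast_mem_zmultiples_one d) hcy) hy

theorem mul_sub_mul_mem_zmultiples {d : ℤ} {a c x y : R} (hax : a - x ∈ zmultiples (d : R))
    (hcy : c - y ∈ zmultiples (d : R)) (hx : x ∈ zmultiples 1) (hy : y ∈ zmultiples 1) :
    a * c - x * y ∈ zmultiples (d : R) := by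
  rw [show a * c - x * y = (a - x) * c + x * (c - y) by ring]
  exact add_mem
    (mul_one (d : R) ▸ mul_mem_zmultiples_mul hax (mem_zmultiples_one_of_sub_mem hcy hy))
    (one_mul (d : R) ▸ mul_mem_zmultiples_mul hx hcy)

theorem coeff_mul_sub_coeff_mul_mem_zmultiples {d : ℤ} {M : ℕ} {U U' V V' : R⟦X⟧}
    (hU : ∀ k ≤ M, coeff k U - coeff k V ∈ zmultiples (d : R))
    (hU' : ∀ k ≤ M, coeff k U' - coeff k V' ∈ zmultiples (d : R))
    (hV : ∀ k, coeff k V ∈ zmultiples 1) (hV' : ∀ k, coeff k V' ∈ zmultiples 1) :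
    ∀ k ≤ M, coeff k (U * U') - coeff k (V * V') ∈ zmultiples (d : R) := by
  intro k hk
  rw [coeff_mul, coeff_mul, ← sum_sub_distrib]
  refine sum_mem fun p hp => ?_
  have hpk := mem_antidiagonal.mp hp
  exact mul_sub_mul_mem_zmultiples (hU _ (by omega)) (hU' _ (by omega)) (hV _) (hV' _)

theorem coeff_one_mem_zmultiples_one (k : ℕ) : coeff k (1 : R⟦X⟧) ∈ zmultiples 1 := by
  rw [coeff_one]
  split_ifs
  exacts [mem_zmultiples 1, zero_mem _]

theorem coeff_pow_sub_coeff_one_mem_zmultiples {d : ℤ} {M : ℕ} {U : R⟦X⟧}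
    (hU : ∀ k ≤ M, coeff k U - coeff k (1 : R⟦X⟧) ∈ zmultiples (d : R)) (m : ℕ) :
    ∀ k ≤ M, coeff k (U ^ m) - coeff k (1 : R⟦X⟧) ∈ zmultiples (d : R) := by
  induction m with
  | zero => simp
  | succ m ih =>
    simpa only [pow_succ, mul_one] using coeff_mul_sub_coeff_mul_mem_zmultiples ih hU
      coeff_one_mem_zmultiples_one coeff_one_mem_zmultiples_one

end

theorem coeff_PSComp_X_mul_self {U : ℚ⟦X⟧} (hU : constantCoeff U = 1) (k : ℕ) :
    coeff (k + 2) (PSComp (X * U) (X * U)) =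
      2 * coeff (k + 1) U + ∑ i ∈ range k, coeff (i + 1) U * coeff (k - i) (U ^ (i + 2)) := by
  have hpow : ∀ m ≤ k + 2, coeff (k + 2) ((X * U) ^ m) = coeff (k + 2 - m) (U ^ m) :=
    fun m hm => by rw [mul_pow, coeff_X_pow_mul', if_pos hm]
  have hmid : ∀ i ∈ range k, coeff (i + 1 + 1) (X * U) * coeff (k + 2) ((X * U) ^ (i + 1 + 1)) =
      coeff (i + 1) U * coeff (k - i) (U ^ (i + 2)) := fun i hi => by
    rw [coeff_succ_X_mul, hpow _ (by simp at hi; omega), show k + 2 - (i + 1 + 1) = k - i by omega]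
  rw [PSComp, coeff_mk, sum_range_succ, sum_range_succ', sum_range_succ', sum_congr rfl hmid,
    hpow _ le_rfl, hpow _ (by omega)]
  simp only [coeff_zero_X_mul, coeff_succ_X_mul, coeff_zero_eq_constantCoeff, hU, zero_add,
    pow_one, Nat.sub_self, map_pow, one_pow, show k + 2 - 1 = k + 1 by omega]
  ring

theorem coeff_sub_coeff_one_mem_zmultiples_two {U G : ℚ⟦X⟧} (hU : constantCoeff U = 1)
    (hG : ∀ n, 2 ≤ n → coeff n G ∈ zmultiples (4 : ℚ)) (hUG : PSComp (X * U) (X * U) = G)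
    (n : ℕ) : coeff n U - coeff n (1 : ℚ⟦X⟧) ∈ zmultiples ((2 : ℤ) : ℚ) := by
  induction n using Nat.strong_induction_on with
  | _ n ih =>
  cases n with
  | zero => simp [hU]
  | succ k =>
    have hsum : ∑ i ∈ range k, coeff (i + 1) U * coeff (k - i) (U ^ (i + 2)) ∈
        zmultiples (4 : ℚ) := by
      refine sum_mem fun i hi => ?_
      have hik := mem_range.mp hi
      have hU_even := ih (i + 1) (by omega)
      have hpow_even := coeff_pow_sub_coeff_one_mem_zmultiples
        (fun j hj => ih j (Nat.lt_succ_of_le hj)) (i + 2) (k - i) (by omega)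
      rw [coeff_one, if_neg (by omega), sub_zero] at hU_even hpow_even
      simpa [show (2 : ℚ) * 2 = 4 by norm_num] using mul_mem_zmultiples_mul hU_even hpow_even
    have htwice : 2 * coeff (k + 1) U ∈ zmultiples (4 : ℚ) := by
      have hGk := hG (k + 2) (by omega)
      rw [← hUG, coeff_PSComp_X_mul_self hU] at hGk
      simpa using sub_mem hGk hsum
    obtain ⟨z, hz⟩ := mem_zmultiples_iff.mp htwice
    rw [coeff_one, if_neg (by omega), sub_zero]
    exact mem_zmultiples_iff.mpr ⟨z, by rw [zsmul_eq_mul] at hz ⊢; push_cast; linarith⟩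

theorem stmt_12_general (F : PowerSeries ℚ)
    (hFint : ∀ n, ∃ m : ℤ, coeff n F = m)
    (G : PowerSeries ℚ)
    (hG : ∀ n, 1 ≤ n → coeff n G = 4 ^ (n - 1) * coeff n F)
    (A : PowerSeries ℚ) (hA0 : constantCoeff A = 0) (hA1 : coeff 1 A = 1)
    (hAG : PSComp A A = G) :
    ∀ n, ∃ m : ℤ, coeff n A = m := by
  obtain ⟨U, rfl⟩ := X_dvd_iff.mpr hA0
  have hU : constantCoeff U = 1 := by rwa [coeff_succ_X_mul, coeff_zero_eq_constantCoeff] at hA1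
  have hG4 : ∀ n, 2 ≤ n → coeff n G ∈ zmultiples (4 : ℚ) := fun n hn => by
    obtain ⟨m, hm⟩ := hFint n
    rw [hG n (by omega), hm, show n - 1 = n - 2 + 1 by omega, pow_succ, mul_comm _ (4 : ℚ),
      mul_assoc, mul_comm]
    exact_mod_cast intCast_mul_mem_zmultiples (4 : ℚ) (4 ^ (n - 2) * m)
  rintro (_ | n)
  · exact ⟨0, by simp⟩
  · obtain ⟨m, hm⟩ := mem_zmultiples_iff.mp <| mem_zmultiples_one_of_sub_mem
      (coeff_sub_coeff_one_mem_zmultiples_two hU hG4 hAG n) (coeff_one_mem_zmultiples_one n)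
    exact ⟨m, by rw [coeff_succ_X_mul, ← hm, zsmul_one]⟩

theorem stmt_12 (F : PowerSeries ℚ) (hF0 : constantCoeff F = 0)
    (hFint : ∀ n, ∃ m : ℤ, coeff n F = m) (hF1 : coeff 1 F = 1)
    (G : PowerSeries ℚ) (hG0 : constantCoeff G = 0)
    (hG : ∀ n, 1 ≤ n → coeff n G = 4 ^ (n - 1) * coeff n F)
    (A : PowerSeries ℚ) (hA0 : constantCoeff A = 0) (hA1 : coeff 1 A = 1)
    (hAG : PSComp A A = G) :
    ∀ n, ∃ m : ℤ, coeff n A = m :=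
  stmt_12_general F hFint G hG A hA0 hA1 hAG
end

section
/- Let A(x) be a formal power series over ℚ with zero constant term and A^Δ(n,k) = [x^n]A(x)^k its composita, and suppose A(A(x)) = F(x) where F has linear coefficient 1 and integer coefficients, with A having linear coefficient 1. Define the recurrence B(n,n) = 1 and B(n,k) = (1/2)·(F^Δ(n,k) − Σ_{m=k+1}^{n−1} B(n,m)·B(m,k)) for n > k. Then A^Δ(n,k) = B(n,k) for all 1 ≤ k ≤ n. -/
/-!
Composition with a series of zero constant term is a ring homomorphism, so
`F ^ k = (A ∘ A) ^ k = (A ^ k) ∘ A` and `[x^n] F ^ k = ∑ₘ A^Δ(m,k) A^Δ(n,m)`.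
Only `k ≤ m ≤ n` contribute, and since `A^Δ(m,m) = 1` the two end terms `m = k` and `m = n`
both equal `A^Δ(n,k)`. Hence the composita of `A` satisfies the recurrence defining `B`,
which determines `B` by induction on `n - k`.
-/

open PowerSeries Finset

namespace PowerSeries

section CommSemiring

variable {R : Type*} [CommSemiring R] {A : R⟦X⟧}

theorem coeff_pow_eq_zero_of_lt (hA0 : constantCoeff A = 0) {m n : ℕ} (h : n < m) :
    coeff n (A ^ m) = 0 :=
  X_pow_dvd_iff.mp (pow_dvd_pow_of_dvd (X_dvd_iff.mpr hA0) m) n h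

theorem coeff_self_pow (hA0 : constantCoeff A = 0) (n : ℕ) :
    coeff n (A ^ n) = coeff 1 A ^ n := by
  obtain ⟨A', rfl⟩ := X_dvd_iff.mpr hA0
  rw [mul_pow, coeff_X_pow_mul', if_pos le_rfl, Nat.sub_self, coeff_zero_eq_constantCoeff,
    map_pow, coeff_succ_X_mul, coeff_zero_eq_constantCoeff]

end CommSemiring

variable {G A : ℚ⟦X⟧}

theorem psComp_eq_subst (hA0 : constantCoeff A = 0) : PSComp G A = G.subst A := by
  ext n
  rw [PSComp, coeff_mk, coeff_subst' (HasSubst.of_constantCoeff_zero' hA0)]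
  refine (finsum_eq_sum_of_support_subset _ fun m hm => ?_).symm
  by_contra hmn
  rw [coe_range, Set.mem_Iio, not_lt] at hmn
  exact hm (by simp [coeff_pow_eq_zero_of_lt hA0 (Nat.lt_of_succ_le hmn)])

theorem psComp_pow (hA0 : constantCoeff A = 0) (k : ℕ) : PSComp G A ^ k = PSComp (G ^ k) A := by
  rw [psComp_eq_subst hA0, psComp_eq_subst hA0,
    subst_pow (HasSubst.of_constantCoeff_zero' hA0)]

theorem coeff_psComp_self_pow (hA0 : constantCoeff A = 0) (hA1 : coeff 1 A = 1) {k n : ℕ}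
    (hkn : k < n) :
    coeff n (PSComp A A ^ k) =
      2 * coeff n (A ^ k) + ∑ m ∈ Ioo k n, coeff m (A ^ k) * coeff n (A ^ m) := by
  have hdiag (m : ℕ) : coeff m (A ^ m) = 1 := by rw [coeff_self_pow hA0, hA1, one_pow]
  have hlow : ∑ m ∈ range k, coeff m (A ^ k) * coeff n (A ^ m) = 0 :=
    sum_eq_zero fun m hm => by
      rw [coeff_pow_eq_zero_of_lt hA0 (mem_range.mp hm), zero_mul]
  rw [psComp_pow hA0, PSComp, coeff_mk, ← sum_range_add_sum_Ico _ (by omega : k ≤ n + 1), hlow,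
    zero_add, sum_Ico_succ_top hkn.le, sum_eq_sum_Ico_succ_bot hkn, Ico_add_one_left_eq_Ioo,
    hdiag, hdiag]
  ring

theorem coeff_pow_eq_of_recurrence (hA0 : constantCoeff A = 0) (hA1 : coeff 1 A = 1)
    {B : ℕ → ℕ → ℚ} (hBdiag : ∀ n, B n n = 1)
    (hBrec : ∀ n k, k < n →
      B n k = (1 / 2) * (coeff n (PSComp A A ^ k) - ∑ m ∈ Ioo k n, B n m * B m k))
    {n k : ℕ} (hkn : k ≤ n) : coeff n (A ^ k) = B n k := by
  induction hd : n - k using Nat.strong_induction_on generalizing n k with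
  | _ d ih =>
    rcases hkn.eq_or_lt with rfl | hlt
    · rw [coeff_self_pow hA0, hA1, one_pow, hBdiag]
    have hsum : ∑ m ∈ Ioo k n, B n m * B m k
        = ∑ m ∈ Ioo k n, coeff m (A ^ k) * coeff n (A ^ m) :=
      sum_congr rfl fun m hm => by
        rw [mem_Ioo] at hm
        rw [← ih (n - m) (by omega) hm.2.le rfl, ← ih (m - k) (by omega) hm.1.le rfl, mul_comm]
    rw [hBrec n k hlt, coeff_psComp_self_pow hA0 hA1 hlt, hsum]
    ring

end PowerSeries

theorem stmt_13_general (F A : PowerSeries ℚ)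
    (hA0 : constantCoeff A = 0) (hA1 : coeff 1 A = 1)
    (hAF : PSComp A A = F)
    (B : ℕ → ℕ → ℚ) (hBdiag : ∀ n, B n n = 1)
    (hBrec : ∀ n k, k < n →
      B n k = (1 / 2) * (coeff n (F ^ k) - ∑ m ∈ Ioo k n, B n m * B m k)) :
    ∀ n k, 1 ≤ k → k ≤ n → coeff n (A ^ k) = B n k := by
  subst hAF
  exact fun _ _ _ hkn => coeff_pow_eq_of_recurrence hA0 hA1 hBdiag hBrec hkn

theorem stmt_13 (F A : PowerSeries ℚ)
    (hA0 : constantCoeff A = 0) (hA1 : coeff 1 A = 1)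
    (hF1 : coeff 1 F = 1) (hFint : ∀ n, ∃ m : ℤ, coeff n F = m)
    (hAF : PSComp A A = F)
    (B : ℕ → ℕ → ℚ) (hBdiag : ∀ n, B n n = 1)
    (hBrec : ∀ n k, k < n →
      B n k = (1 / 2) * (coeff n (F ^ k) - ∑ m ∈ Ioo k n, B n m * B m k)) :
    ∀ n k, 1 ≤ k → k ≤ n → coeff n (A ^ k) = B n k :=
  stmt_13_general F A hA0 hA1 hAF B hBdiag hBrec
end
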